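/- Let a, b, c ∈ F_{q²} with a^q + b ∉ F_q. Then Σ_{u ∈ F_q, u ≠ 0} Σ_{w ∈ F_{q²}} χ(u·w^{q+1} + u·w² + (a^q·u^q + b·u)·w + c·u) = 0. -/

import Mathlib

/-!
Fix `u ∈ 𝔽_q^*` and put `d = (a^q + b) u`, so that `d^q ≠ d`. Translating `w` by any `s` with
`s^q = -s` changes the argument of `χ` by `u s Tr(w) + d s`, and `u s Tr(w)` is again negated by
the `q`-Frobenius, so its absolute trace vanishes (`p` is odd). Hence the inner sum `S` satisfies
`S = χ(d s) S`. For `s = x^q - x` one has `χ(d s) = χ((d^q - d) x)`, which differs from `1` for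
some `x` because `χ` is primitive; so `S = 0`.
-/

open Finset

theorem Fintype.sum_eq_zero_of_add_right_eq_mul {G R : Type*} [AddGroup G] [Fintype G]
    [CommRing R] [IsDomain R] {f : G → R} {s : G} {c : R} (hc : c ≠ 1)
    (hf : ∀ w, f (w + s) = c * f w) : ∑ w, f w = 0 := by
  have h : c * ∑ w, f w = ∑ w, f w := by
    simp_rw [mul_sum, ← hf]
    exact Equiv.sum_comp (Equiv.addRight s) f
  by_contra h0
  exact hc ((mul_eq_right₀ h0).mp h)

namespace FiniteField

variable {p : ℕ} [Fact p.Prime] {K : Type*} [Field K] [Algebra (ZMod p) K]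

theorem trace_pow_prime_pow [Finite K] (k : ℕ) (x : K) :
    Algebra.trace (ZMod p) K (x ^ p ^ k) = Algebra.trace (ZMod p) K x := by
  have h : (frobeniusAlgEquivOfAlgebraic (ZMod p) K ^ k) x = x ^ p ^ k := by
    rw [AlgEquiv.coe_pow, coe_frobeniusAlgEquivOfAlgebraic_iterate, ZMod.card]
  rw [← h, Algebra.trace_eq_of_algEquiv]

theorem trace_eq_zero_of_pow_eq_neg [Finite K] (hp : p ≠ 2) {k : ℕ} {y : K}
    (hy : y ^ p ^ k = -y) : Algebra.trace (ZMod p) K y = 0 := by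
  have h := trace_pow_prime_pow (p := p) k y
  rw [hy, map_neg, neg_eq_iff_add_eq_zero, ← two_mul] at h
  exact (mul_eq_zero.mp h).resolve_left (Ring.two_ne_zero (by rwa [ZMod.ringChar_zmod_n]))

theorem natCast_val_trace [Fintype K] {N : ℕ} (hK : Fintype.card K = p ^ N) (x : K) :
    ((Algebra.trace (ZMod p) K x).val : K) = ∑ i ∈ range N, x ^ p ^ i := by
  have hN : Module.finrank (ZMod p) K = N := by
    rw [Module.card_eq_pow_finrank (K := ZMod p), ZMod.card] at hK
    exact Nat.pow_right_injective (Fact.out : p.Prime).two_le hK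
  rw [← map_natCast (algebraMap (ZMod p) K), ZMod.natCast_zmod_val,
    algebraMap_trace_eq_sum_pow, hN, Nat.card_zmod]

section traceChar

variable {C : Type*} [CommMonoid C] {ζ : C}

noncomputable def traceChar (hζ : IsPrimitiveRoot ζ p) : AddChar K C :=
  (AddChar.zmodChar p hζ.pow_eq_one).compAddMonoidHom (Algebra.trace (ZMod p) K).toAddMonoidHom

theorem traceChar_apply (hζ : IsPrimitiveRoot ζ p) (x : K) :
    traceChar hζ x = ζ ^ (Algebra.trace (ZMod p) K x).val :=
  rfl

theorem isPrimitive_traceChar [Finite K] (hζ : IsPrimitiveRoot ζ p) :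
    (traceChar (K := K) hζ).IsPrimitive := by
  refine AddChar.IsPrimitive.of_ne_one (AddChar.ne_one_iff.mpr ?_)
  obtain ⟨x, hx⟩ := Algebra.trace_surjective (ZMod p) K (1 : ZMod p)
  refine ⟨x, fun h => one_ne_zero (hx.symm.trans ?_)⟩
  exact ((AddChar.zmodChar_primitive_of_primitive_root p hζ).zmod_char_eq_one_iff p _).mp h

theorem traceChar_eq_one_of_pow_eq_neg [Finite K] (hp : p ≠ 2) (hζ : IsPrimitiveRoot ζ p)
    {k : ℕ} {y : K} (hy : y ^ p ^ k = -y) : traceChar hζ y = 1 := by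
  rw [traceChar_apply, trace_eq_zero_of_pow_eq_neg hp hy, ZMod.val_zero, pow_zero]

end traceChar

theorem sum_traceChar_eq_zero {R : Type*} [CommRing R] [IsDomain R] {ζ : R} [Fintype K]
    (hp : p ≠ 2) (hζ : IsPrimitiveRoot ζ p) {n : ℕ} (hK : Fintype.card K = (p ^ n) ^ 2)
    {u d : K} (hu : u ^ p ^ n = u) (hd : d ^ p ^ n ≠ d) (c : K) :
    ∑ w : K, traceChar hζ (u * w ^ (p ^ n + 1) + u * w ^ 2 + d * w + c) = 0 := by
  have : CharP K p := charP_of_injective_algebraMap' (ZMod p) p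
  have hqq : ∀ x : K, (x ^ p ^ n) ^ p ^ n = x := fun x => by
    rw [← pow_mul, ← sq, ← hK, FiniteField.pow_card]
  obtain ⟨x, hx⟩ : ∃ x, traceChar hζ ((d ^ p ^ n - d) * x) ≠ 1 :=
    AddChar.ne_one_iff.mp (isPrimitive_traceChar hζ (sub_ne_zero.mpr hd))
  set s := x ^ p ^ n - x
  have hs : s ^ p ^ n = -s := by rw [sub_pow_char_pow, hqq]; ring
  have hds : traceChar hζ (d * s) = traceChar hζ ((d ^ p ^ n - d) * x) := by
    have hy : (d * x ^ p ^ n - d ^ p ^ n * x) ^ p ^ n = -(d * x ^ p ^ n - d ^ p ^ n * x) := by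
      simp only [sub_pow_char_pow, mul_pow, hqq]; ring
    rw [show d * s = (d * x ^ p ^ n - d ^ p ^ n * x) + (d ^ p ^ n - d) * x by ring,
      AddChar.map_add_eq_mul, traceChar_eq_one_of_pow_eq_neg hp hζ hy, one_mul]
  refine Fintype.sum_eq_zero_of_add_right_eq_mul (s := s) (hds ▸ hx) fun w => ?_
  have hw : (u * s * (w ^ p ^ n + w)) ^ p ^ n = -(u * s * (w ^ p ^ n + w)) := by
    simp only [mul_pow, add_pow_char_pow, hu, hs, hqq]; ring
  have expand : u * (w + s) ^ (p ^ n + 1) + u * (w + s) ^ 2 + d * (w + s) + c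
      = (u * w ^ (p ^ n + 1) + u * w ^ 2 + d * w + c) + u * s * (w ^ p ^ n + w) + d * s := by
    rw [pow_succ, add_pow_char_pow, hs]; ring
  rw [expand, AddChar.map_add_eq_mul, AddChar.map_add_eq_mul,
    traceChar_eq_one_of_pow_eq_neg hp hζ hw, mul_one, mul_comm]

end FiniteField

open scoped Classical

theorem stmt17_general (p n q : ℕ) (hp : p.Prime) (hp2 : p ≠ 2)
    (hq : q = p ^ n)
    (K : Type) [Field K] [Fintype K] (hK : Fintype.card K = q ^ 2)
    (ζ : ℂ) (hζ : IsPrimitiveRoot ζ p)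
    (χ : K → ℂ)
    (hχ : ∀ x : K, ∀ m : ℕ, (m : K) = ∑ i ∈ Finset.range (2 * n), x ^ p ^ i →
      χ x = ζ ^ m)
    (a b c : K) (hab : (a ^ q + b) ^ q ≠ a ^ q + b) :
    ∑ u ∈ Finset.univ.filter (fun u : K => u ^ q = u ∧ u ≠ 0),
      ∑ w : K,
        χ (u * w ^ (q + 1) + u * w ^ 2 + (a ^ q * u ^ q + b * u) * w + c * u) = 0 := by
  have : Fact p.Prime := ⟨hp⟩
  subst hq
  have hK' : Fintype.card K = p ^ (2 * n) := by rw [hK, ← pow_mul, mul_comm]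
  have : CharP K p := charP_of_card_eq_prime_pow hK'
  let := ZMod.algebra K p
  have hχψ (x : K) : χ x = FiniteField.traceChar hζ x :=
    hχ x _ (FiniteField.natCast_val_trace hK' x)
  refine sum_eq_zero fun u hu => ?_
  obtain ⟨hu, hu0⟩ := (mem_filter.mp hu).2
  have hd : (a ^ p ^ n * u ^ p ^ n + b * u) ^ p ^ n ≠ a ^ p ^ n * u ^ p ^ n + b * u := by
    rw [hu, ← add_mul, mul_pow, hu]
    exact fun h => hab (mul_right_cancel₀ hu0 h)
  simp_rw [hχψ]
  exact FiniteField.sum_traceChar_eq_zero hp2 hζ hK hu hd (c * u)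

/-- Let `a, b, c ∈ F_{q²}` with `a^q + b ∉ F_q`. Then
`∑_{u ∈ F_q*} ∑_{w ∈ F_{q²}} χ(u·w^{q+1} + u·w² + (a^q·u^q + b·u)·w + c·u) = 0`.
Here `q` is a power of an odd prime `p`, `K` plays the role of `F_{q²}`,
`F_q = {x : K | x^q = x}`, and `χ` is the canonical additive character of `F_{q²}`
(via the absolute trace `∑_{i < 2n} x^(p^i)`). -/
theorem stmt17 (p n q : ℕ) (hp : p.Prime) (hp2 : p ≠ 2) (hn : 0 < n)
    (hq : q = p ^ n)
    (K : Type) [Field K] [Fintype K] (hK : Fintype.card K = q ^ 2)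
    (ζ : ℂ) (hζ : IsPrimitiveRoot ζ p)
    (χ : K → ℂ)
    (hχ : ∀ x : K, ∀ m : ℕ, (m : K) = ∑ i ∈ Finset.range (2 * n), x ^ p ^ i →
      χ x = ζ ^ m)
    (a b c : K) (hab : (a ^ q + b) ^ q ≠ a ^ q + b) :
    ∑ u ∈ Finset.univ.filter (fun u : K => u ^ q = u ∧ u ≠ 0),
      ∑ w : K,
        χ (u * w ^ (q + 1) + u * w ^ 2 + (a ^ q * u ^ q + b * u) * w + c * u) = 0 :=
  stmt17_general p n q hp hp2 hq K hK ζ hζ χ hχ a b c hab
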